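/- Assume U satisfies Assumption 1 and P(Z > 0) > 0. Let D ⊆ ℝ^d be a closed set containing a point x₁ with E[U(W(x₁))] > −∞. Then the map x ↦ E[U(W(x))] is upper semi-continuous, and the problem max_{x∈D} E[U(W(x))] has a solution: there exists x₀ ∈ D with E[U(W(x₀))] > −∞ and E[U(W(x))] ≤ E[U(W(x₀))] for all x ∈ D. -/

import Mathlib

open MeasureTheory ProbabilityTheory Filter Matrix
open scoped ENNReal NNReal Topology

noncomputable section

/-- Signed expectation with values in `EReal`. -/
def eexp {Ω : Type*} [MeasurableSpace Ω] (P : Measure Ω) (f : Ω → ℝ) : EReal :=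
  ((∫⁻ ω, ENNReal.ofReal (f ω) ∂P : ℝ≥0∞) : EReal) -
    ((∫⁻ ω, ENNReal.ofReal (-(f ω)) ∂P : ℝ≥0∞) : EReal)

/-- NMVM return vector `X = μ + γ Z + √Z A N`. -/
def nmvmX {Ω : Type*} {d : ℕ} (μ γ : Fin d → ℝ) (A : Matrix (Fin d) (Fin d) ℝ)
    (Z : Ω → ℝ) (N : Ω → Fin d → ℝ) (ω : Ω) : Fin d → ℝ :=
  fun i => μ i + γ i * Z ω + Real.sqrt (Z ω) * (A *ᵥ N ω) i

/-- Next-period wealth `W(x) = W₀(1+r_f) + W₀ xᵀ(X − 𝟏 r_f)` of portfolio `x`. -/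
def wealth {Ω : Type*} {d : ℕ} (μ γ : Fin d → ℝ) (A : Matrix (Fin d) (Fin d) ℝ)
    (Z : Ω → ℝ) (N : Ω → Fin d → ℝ) (rf W0 : ℝ) (x : Fin d → ℝ) (ω : Ω) : ℝ :=
  W0 * (1 + rf) + W0 * ∑ i, x i * (nmvmX μ γ A Z N ω i - rf)

/-! Let `c ≥ 0` bound `U` from above. Then `E[U(W(x))] = c - G x` with
`G x = ∫⁻ (c - U(W(x)))⁺`, so maximising expected utility is minimising `G`, which Fatou's lemma
makes lower semicontinuous. For coercivity, the event that `Z ∈ [η, K] ⊂ (0, ∞)` and that the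
Gaussian vector `N` lies in a box forcing `(Aᵀx)·N ≤ -T‖Aᵀx‖` has probability bounded below
uniformly in `x`; since `A` is invertible the noise term `√Z (Aᵀx)·N` then beats the drift
linearly in `‖x‖`, so `W(x) ≤ W₀(1+r_f) - W₀‖x‖` with probability at least `δ > 0`. By Markov's
inequality `G x ≥ δ (c - U(W₀(1+r_f) - W₀‖x‖)) → ∞` at infinity, and a lower semicontinuous
function that is large away from a compact set attains its minimum on a closed set. -/

lemma lowerSemicontinuous_lintegral {α Ω : Type*} [TopologicalSpace α] [FirstCountableTopology α]
    [MeasurableSpace Ω] (P : Measure Ω) {g : α → Ω → ℝ≥0∞} (hmeas : ∀ x, Measurable (g x))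
    (hlsc : ∀ ω, LowerSemicontinuous fun x => g x ω) :
    LowerSemicontinuous fun x => ∫⁻ ω, g x ω ∂P :=
  lowerSemicontinuous_iff_le_liminf.2 fun x =>
    (lintegral_mono fun ω => (hlsc ω).le_liminf x).trans (lintegral_liminf_le hmeas)

lemma LowerSemicontinuousOn.exists_isMinOn' {α β : Type*} [TopologicalSpace α] [LinearOrder β]
    {s : Set α} {f : α → β} (hf : LowerSemicontinuousOn f s) (hsc : IsClosed s) {x₀ : α}
    (h₀ : x₀ ∈ s) (hc : ∀ᶠ x in cocompact α ⊓ 𝓟 s, f x₀ ≤ f x) : ∃ x ∈ s, IsMinOn f s x := by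
  rcases (hasBasis_cocompact.inf_principal _).eventually_iff.1 hc with ⟨K, hK, hKf⟩
  have hsub : insert x₀ (K ∩ s) ⊆ s := Set.insert_subset_iff.2 ⟨h₀, Set.inter_subset_right⟩
  obtain ⟨x, hx, hxf⟩ := (hf.mono hsub).exists_isMinOn (Set.insert_nonempty _ _)
    ((hK.inter_right hsc).insert x₀)
  refine ⟨x, hsub hx, fun y hy => ?_⟩
  by_cases hyK : y ∈ K
  exacts [hxf (Or.inr ⟨hyK, hy⟩), (hxf (Or.inl rfl)).trans (hKf ⟨hyK, hy⟩)]

lemma continuous_coe_sub_coe_ennreal (c : ℝ) : Continuous fun t : ℝ≥0∞ => (c : EReal) - t := by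
  refine continuous_iff_continuousAt.2 fun t => ?_
  have hadd : ContinuousAt (fun p : EReal × EReal => p.1 + p.2) ((c : EReal), -(t : EReal)) :=
    EReal.continuousAt_add (.inl (EReal.coe_ne_top c)) (.inl (EReal.coe_ne_bot c))
  exact ContinuousAt.comp (f := fun t : ℝ≥0∞ => ((c : EReal), -(t : EReal))) hadd
    (continuous_const.prodMk (continuous_neg.comp continuous_coe_ennreal_ereal)).continuousAt

lemma antitone_coe_sub_coe_ennreal (c : ℝ) : Antitone fun t : ℝ≥0∞ => (c : EReal) - t :=
  fun _ _ h => EReal.sub_le_sub le_rfl (EReal.coe_ennreal_le_coe_ennreal_iff.2 h)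

lemma EReal.bot_lt_coe_sub_coe_ennreal_iff {c : ℝ} {t : ℝ≥0∞} : ⊥ < (c : EReal) - t ↔ t < ⊤ := by
  induction t using ENNReal.recTopCoe with
  | top => simp
  | coe t => simp [EReal.coe_nnreal_eq_coe_real, ← EReal.coe_sub]

lemma EReal.coe_ennreal_sub_eq_sub_of_add_eq {a b c g : ℝ≥0∞} (ha : a ≠ ⊤) (hc : c ≠ ⊤)
    (h : g + a = c + b) : (a : EReal) - b = (c : EReal) - g := by
  rcases eq_or_ne b ⊤ with rfl | hb
  · have hg : g = ⊤ := by simpa [ha] using h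
    simp [hg]
  · have hg : g ≠ ⊤ := fun hg => ENNReal.add_ne_top.2 ⟨hc, hb⟩ (by simpa [hg] using h.symm)
    lift a to ℝ≥0 using ha
    lift b to ℝ≥0 using hb
    lift c to ℝ≥0 using hc
    lift g to ℝ≥0 using hg
    have h' : (g : ℝ) + a = c + b := by exact_mod_cast h
    simp only [EReal.coe_nnreal_eq_coe_real, ← EReal.coe_sub, EReal.coe_eq_coe_iff]
    linarith

lemma eexp_eq_sub_lintegral {Ω : Type*} [MeasurableSpace Ω] (P : Measure Ω)
    [IsProbabilityMeasure P] {f : Ω → ℝ} (hf : Measurable f) {c : ℝ} (hc : 0 ≤ c)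
    (hfc : ∀ ω, f ω ≤ c) :
    eexp P f = (c : EReal) - ((∫⁻ ω, ENNReal.ofReal (c - f ω) ∂P : ℝ≥0∞) : EReal) := by
  have hpoint : ∀ ω, ENNReal.ofReal (c - f ω) + ENNReal.ofReal (f ω)
      = ENNReal.ofReal c + ENNReal.ofReal (-f ω) := fun ω => by
    rcases le_total 0 (f ω) with h | h
    · rw [ENNReal.ofReal_of_nonpos (neg_nonpos.2 h), add_zero,
        ← ENNReal.ofReal_add (sub_nonneg.2 (hfc ω)) h, sub_add_cancel]
    · rw [ENNReal.ofReal_of_nonpos h, add_zero, ← ENNReal.ofReal_add hc (neg_nonneg.2 h),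
        sub_eq_add_neg]
  have hpos : ∫⁻ ω, ENNReal.ofReal (f ω) ∂P ≤ ENNReal.ofReal c := by
    simpa using lintegral_mono (μ := P) fun ω => ENNReal.ofReal_le_ofReal (hfc ω)
  have h := EReal.coe_ennreal_sub_eq_sub_of_add_eq
    (ne_top_of_le_ne_top ENNReal.ofReal_ne_top hpos) ENNReal.ofReal_ne_top (c := ENNReal.ofReal c)
    (b := ∫⁻ ω, ENNReal.ofReal (-f ω) ∂P) (g := ∫⁻ ω, ENNReal.ofReal (c - f ω) ∂P) ?_
  · rwa [EReal.coe_ennreal_ofReal, max_eq_left hc] at h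
  rw [← lintegral_add_right _ hf.ennreal_ofReal, lintegral_congr hpoint,
    lintegral_add_left measurable_const]
  simp

lemma exists_measure_preimage_Icc_pos {Ω : Type*} [MeasurableSpace Ω] (P : Measure Ω)
    {Z : Ω → ℝ} (hZ : 0 < P {ω | 0 < Z ω}) : ∃ η K : ℝ, 0 < η ∧ 0 < P (Z ⁻¹' Set.Icc η K) := by
  have hcover : {ω | 0 < Z ω} ⊆ ⋃ n : ℕ, Z ⁻¹' Set.Icc ((n : ℝ) + 1)⁻¹ ((n : ℝ) + 1) := by
    intro ω (hω : 0 < Z ω)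
    obtain ⟨n, hn⟩ := exists_nat_gt (max (Z ω) (Z ω)⁻¹)
    rw [max_lt_iff] at hn
    refine Set.mem_iUnion.2 ⟨n, (inv_le_comm₀ (by positivity) hω).2 (by linarith), by linarith⟩
  obtain ⟨n, hn⟩ := exists_measure_pos_of_not_measure_iUnion_null
    fun h => hZ.ne' (measure_mono_null hcover h)
  exact ⟨_, _, by positivity, hn⟩

lemma pow_card_le_pi_univ_pi {ι : Type*} [Fintype ι] {ν : Measure ℝ} [SigmaFinite ν]
    {S : ι → Set ℝ} {ρ : ℝ≥0∞} (hρ : ∀ j, ρ ≤ ν (S j)) :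
    ρ ^ Fintype.card ι ≤ Measure.pi (fun _ : ι => ν) (Set.univ.pi S) := by
  rw [Measure.pi_pi, ← Finset.card_univ, ← Finset.prod_const]
  exact Finset.prod_le_prod' fun j _ => hρ j

lemma exists_pos_forall_le_pi_dotProduct_le {ι : Type*} [Fintype ι] [DecidableEq ι]
    (ν : Measure ℝ) [SigmaFinite ν] (hν : volume ≪ ν) (T : ℝ) :
    ∃ ρ > 0, ∀ w : ι → ℝ, ρ ≤ Measure.pi (fun _ : ι => ν) {n | w ⬝ᵥ n ≤ -(T * ‖w‖)} := by
  have hpos : ∀ s : Set ℝ, volume s ≠ 0 → 0 < ν s := fun s hs =>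
    pos_iff_ne_zero.2 fun h => hs (hν h)
  -- Box event: `n j₀` beyond `T'` against the sign of `w j₀`, where `|w j₀| = ‖w‖`, and
  -- `|n j| ≤ 1` otherwise; the shift by `card ι` absorbs the other terms of `w ⬝ᵥ n`.
  set T' := T + Fintype.card ι
  set ρ := min (ν (Set.Iic (-T'))) (min (ν (Set.Ici T')) (ν (Set.Icc (-1) 1)))
  have hρ : 0 < ρ := lt_min (hpos _ (by simp)) (lt_min (hpos _ (by simp)) (hpos _ (by simp)))
  refine ⟨ρ ^ Fintype.card ι, ENNReal.pow_pos hρ _, fun w => ?_⟩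
  rcases eq_or_ne w 0 with rfl | hw
  · refine (pow_card_le_pi_univ_pi (S := fun _ => Set.Icc (-1) 1)
      fun _ => (min_le_right _ _).trans (min_le_right _ _)).trans (measure_mono fun n _ => ?_)
    simp
  obtain ⟨i, hi⟩ := Function.ne_iff.1 hw
  have : Nonempty ι := ⟨i⟩
  obtain ⟨j₀, -, hj₀⟩ := Finset.exists_max_image Finset.univ (fun j => |w j|) Finset.univ_nonempty
  have hnorm : ‖w‖ = |w j₀| := le_antisymm
    ((pi_norm_le_iff_of_nonempty _).2 fun j => hj₀ j (Finset.mem_univ j)) (norm_le_pi_norm w j₀)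
  set I₀ : Set ℝ := if 0 ≤ w j₀ then Set.Iic (-T') else Set.Ici T'
  set S : ι → Set ℝ := Function.update (fun _ => Set.Icc (-1) 1) j₀ I₀
  have hρS : ∀ j, ρ ≤ ν (S j) := by
    intro j
    rcases eq_or_ne j j₀ with rfl | hj
    · simp only [S, Function.update_self, I₀]
      split_ifs
      exacts [min_le_left _ _, (min_le_right _ _).trans (min_le_left _ _)]
    · simp only [S, Function.update_of_ne hj]
      exact (min_le_right _ _).trans (min_le_right _ _)
  refine (pow_card_le_pi_univ_pi hρS).trans (measure_mono fun n hnS => ?_)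
  have hn : ∀ j, n j ∈ S j := fun j => hnS j (Set.mem_univ j)
  have hlead : w j₀ * n j₀ ≤ -(‖w‖ * T') := by
    have h := hn j₀
    simp only [S, Function.update_self, I₀] at h
    rw [hnorm]
    split_ifs at h with hsign
    · rw [abs_of_nonneg hsign]; nlinarith [h.out]
    · rw [abs_of_neg (not_le.1 hsign)]; nlinarith [h.out]
  have hrest : ∑ j ∈ Finset.univ.erase j₀, w j * n j ≤ Fintype.card ι * ‖w‖ := by
    calc ∑ j ∈ Finset.univ.erase j₀, w j * n j ≤ (Finset.univ.erase j₀).card • ‖w‖ := by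
          refine Finset.sum_le_card_nsmul _ _ _ fun j hj => ?_
          have h := hn j
          simp only [S, Function.update_of_ne (Finset.ne_of_mem_erase hj)] at h
          calc w j * n j ≤ |w j| * |n j| := (le_abs_self _).trans (abs_mul _ _).le
            _ ≤ ‖w‖ * 1 := mul_le_mul (norm_le_pi_norm w j) (abs_le.2 h) (abs_nonneg _)
                (norm_nonneg _)
            _ = ‖w‖ := mul_one _
      _ ≤ Fintype.card ι * ‖w‖ := by
          rw [nsmul_eq_mul]
          gcongr
          exact_mod_cast Finset.card_erase_le
  show ∑ j, w j * n j ≤ -(T * ‖w‖)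
  rw [← Finset.add_sum_erase _ _ (Finset.mem_univ j₀)]
  linarith

lemma abs_dotProduct_le {ι : Type*} [Fintype ι] (x v : ι → ℝ) :
    |x ⬝ᵥ v| ≤ ‖x‖ * ∑ i, |v i| := by
  rw [Finset.mul_sum]
  refine (Finset.abs_sum_le_sum_abs _ _).trans (Finset.sum_le_sum fun i _ => ?_)
  rw [abs_mul]
  exact mul_le_mul_of_nonneg_right (norm_le_pi_norm x i) (abs_nonneg _)

lemma Matrix.exists_pos_mul_norm_le_norm_vecMul {n : Type*} [Fintype n] [DecidableEq n]
    {A : Matrix n n ℝ} (hA : IsUnit A) : ∃ κ > 0, ∀ x : n → ℝ, κ * ‖x‖ ≤ ‖x ᵥ* A‖ := by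
  obtain ⟨K, -, hK⟩ :=
    (Matrix.vecMulLinear A).injective_iff_antilipschitz.1 (vecMul_injective_of_isUnit hA)
  exact antilipschitzWith_iff_exists_mul_le_norm.1 ⟨K, hK⟩

lemma Matrix.isUnit_of_isUnit_mul {n K : Type*} [Fintype n] [DecidableEq n] [CommRing K]
    {A B : Matrix n n K} (h : IsUnit (A * B)) : IsUnit A := by
  rw [isUnit_iff_isUnit_det, det_mul] at h
  exact A.isUnit_iff_isUnit_det.2 (isUnit_of_mul_isUnit_left h)

section Model

variable {Ω : Type*} {d : ℕ} (μ γ : Fin d → ℝ) (A : Matrix (Fin d) (Fin d) ℝ)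
  (Z : Ω → ℝ) (N : Ω → Fin d → ℝ) (rf W0 : ℝ)

lemma sum_mul_nmvmX_sub (x : Fin d → ℝ) (ω : Ω) :
    ∑ i, x i * (nmvmX μ γ A Z N ω i - rf) =
      x ⬝ᵥ (fun i => μ i - rf) + (x ⬝ᵥ γ) * Z ω + √(Z ω) * ((x ᵥ* A) ⬝ᵥ N ω) := by
  rw [← dotProduct_mulVec]
  simp only [nmvmX, dotProduct, Finset.sum_mul, Finset.mul_sum, ← Finset.sum_add_distrib]
  exact Finset.sum_congr rfl fun i _ => by ring

lemma measurable_wealth [MeasurableSpace Ω] (hZ : Measurable Z) (hN : Measurable N)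
    (x : Fin d → ℝ) : Measurable (wealth μ γ A Z N rf W0 x) := by
  unfold wealth nmvmX Matrix.mulVec dotProduct
  have hNj : ∀ j, Measurable fun ω => N ω j := fun j => (measurable_pi_apply j).comp hN
  fun_prop

lemma continuous_wealth (ω : Ω) : Continuous fun x => wealth μ γ A Z N rf W0 x ω := by
  unfold wealth
  fun_prop

lemma sum_mul_nmvmX_sub_le_neg_norm {x : Fin d → ℝ} {ω : Ω} {η K κ T : ℝ} (hη : 0 < η)
    (hZ : Z ω ∈ Set.Icc η K) (hκ : κ * ‖x‖ ≤ ‖x ᵥ* A‖) (hT0 : 0 ≤ T)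
    (hT : ∑ i, |μ i - rf| + K * ∑ i, |γ i| + 1 ≤ √η * κ * T)
    (hN : (x ᵥ* A) ⬝ᵥ N ω ≤ -(T * ‖x ᵥ* A‖)) :
    ∑ i, x i * (nmvmX μ γ A Z N ω i - rf) ≤ -‖x‖ := by
  obtain ⟨hηZ, hZK⟩ := hZ
  have hmean : x ⬝ᵥ (fun i => μ i - rf) ≤ ‖x‖ * ∑ i, |μ i - rf| :=
    (le_abs_self _).trans (abs_dotProduct_le _ _)
  have hdrift : (x ⬝ᵥ γ) * Z ω ≤ ‖x‖ * (K * ∑ i, |γ i|) :=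
    calc (x ⬝ᵥ γ) * Z ω ≤ |x ⬝ᵥ γ| * K :=
          mul_le_mul (le_abs_self _) hZK (hη.le.trans hηZ) (abs_nonneg _)
      _ ≤ ‖x‖ * (∑ i, |γ i|) * K :=
          mul_le_mul_of_nonneg_right (abs_dotProduct_le _ _) (hη.le.trans (hηZ.trans hZK))
      _ = ‖x‖ * (K * ∑ i, |γ i|) := by ring
  have hnoise : √(Z ω) * ((x ᵥ* A) ⬝ᵥ N ω) ≤ -(√η * κ * T * ‖x‖) :=
    calc √(Z ω) * ((x ᵥ* A) ⬝ᵥ N ω) ≤ √η * ((x ᵥ* A) ⬝ᵥ N ω) :=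
          mul_le_mul_of_nonpos_right (Real.sqrt_le_sqrt hηZ)
            (hN.trans (neg_nonpos.2 (by positivity)))
      _ ≤ √η * -(T * (κ * ‖x‖)) := by
          gcongr
          exact hN.trans (neg_le_neg (mul_le_mul_of_nonneg_left hκ hT0))
      _ = -(√η * κ * T * ‖x‖) := by ring
  have hbeat := mul_le_mul_of_nonneg_right hT (norm_nonneg x)
  rw [sum_mul_nmvmX_sub]
  linarith

lemma exists_pos_forall_le_measure_sum_mul_nmvmX_sub_le [MeasurableSpace Ω] (P : Measure Ω)
    (hN : Measurable N) (hZpos : 0 < P {ω | 0 < Z ω})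
    (hNlaw : Measure.map N P = Measure.pi fun _ : Fin d => gaussianReal 0 1)
    (hindep : IndepFun Z N P) (hA : IsUnit A) :
    ∃ δ > 0, ∀ x : Fin d → ℝ,
      δ ≤ P {ω | ∑ i, x i * (nmvmX μ γ A Z N ω i - rf) ≤ -‖x‖} := by
  obtain ⟨η, K, hη, hηK⟩ := exists_measure_preimage_Icc_pos P hZpos
  obtain ⟨κ, hκ, hκA⟩ := A.exists_pos_mul_norm_le_norm_vecMul hA
  set C := ∑ i, |μ i - rf| + K * ∑ i, |γ i|
  set T := |C + 1| / (√η * κ)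
  have hT : C + 1 ≤ √η * κ * T := by
    rw [mul_div_cancel₀ _ (by positivity)]
    exact le_abs_self _
  obtain ⟨ρ, hρ, hρw⟩ := exists_pos_forall_le_pi_dotProduct_le (gaussianReal 0 1)
    (gaussianReal_absolutelyContinuous' 0 one_ne_zero) T (ι := Fin d)
  refine ⟨P (Z ⁻¹' Set.Icc η K) * ρ, ENNReal.mul_pos hηK.ne' hρ.ne', fun x => ?_⟩
  set E := {n : Fin d → ℝ | (x ᵥ* A) ⬝ᵥ n ≤ -(T * ‖x ᵥ* A‖)}
  have hE : MeasurableSet E := measurableSet_le (by fun_prop) measurable_const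
  calc P (Z ⁻¹' Set.Icc η K) * ρ ≤ P (Z ⁻¹' Set.Icc η K) * P (N ⁻¹' E) := by
        rw [← Measure.map_apply hN hE, hNlaw]
        exact mul_le_mul_right (hρw _) _
    _ = P (Z ⁻¹' Set.Icc η K ∩ N ⁻¹' E) :=
        (hindep.measure_inter_preimage_eq_mul _ _ measurableSet_Icc hE).symm
    _ ≤ _ := measure_mono fun ω ⟨hZ, hNE⟩ =>
        sum_mul_nmvmX_sub_le_neg_norm μ γ A Z N rf hη hZ (hκA x) (by positivity) hT hNE

lemma tendsto_lintegral_ofReal_sub_utility_wealth [MeasurableSpace Ω] (P : Measure Ω)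
    (hZ : Measurable Z) (hN : Measurable N) (hZpos : 0 < P {ω | 0 < Z ω})
    (hNlaw : Measure.map N P = Measure.pi fun _ : Fin d => gaussianReal 0 1)
    (hindep : IndepFun Z N P) (hA : IsUnit A) (hW0 : 0 < W0) {U : ℝ → ℝ} (hUcont : Continuous U)
    (hUmono : Monotone U) (hUbot : Tendsto U atBot atBot) (c : ℝ) :
    Tendsto (fun x => ∫⁻ ω, ENNReal.ofReal (c - U (wealth μ γ A Z N rf W0 x ω)) ∂P)
      (cocompact _) (𝓝 ⊤) := by
  obtain ⟨δ, hδ, hδx⟩ :=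
    exists_pos_forall_le_measure_sum_mul_nmvmX_sub_le μ γ A Z N rf P hN hZpos hNlaw hindep hA
  set wmin : (Fin d → ℝ) → ℝ := fun x => W0 * (1 + rf) - W0 * ‖x‖
  have hwmin : Tendsto wmin (cocompact _) atBot :=
    tendsto_atBot_add_const_left _ _
      (tendsto_neg_atTop_atBot.comp (tendsto_norm_cocompact_atTop.const_mul_atTop hW0))
  have hlow : ∀ x, δ * ENNReal.ofReal (c - U (wmin x)) ≤
      ∫⁻ ω, ENNReal.ofReal (c - U (wealth μ γ A Z N rf W0 x ω)) ∂P := by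
    intro x
    have hmeas : Measurable fun ω => ENNReal.ofReal (c - U (wealth μ γ A Z N rf W0 x ω)) :=
      (measurable_const.sub
        (hUcont.measurable.comp (measurable_wealth μ γ A Z N rf W0 hZ hN x))).ennreal_ofReal
    have hsub : {ω | ∑ i, x i * (nmvmX μ γ A Z N ω i - rf) ≤ -‖x‖} ⊆
        {ω | ENNReal.ofReal (c - U (wmin x)) ≤
          ENNReal.ofReal (c - U (wealth μ γ A Z N rf W0 x ω))} := fun ω hω => by
      have hW : wealth μ γ A Z N rf W0 x ω ≤ wmin x := by
        have := mul_le_mul_of_nonneg_left (Set.mem_ofPred_eq ▸ hω) hW0.le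
        simp only [wealth, wmin]
        linarith
      exact ENNReal.ofReal_le_ofReal (sub_le_sub_left (hUmono hW) c)
    calc δ * ENNReal.ofReal (c - U (wmin x))
        ≤ ENNReal.ofReal (c - U (wmin x)) * P {ω | ENNReal.ofReal (c - U (wmin x)) ≤
            ENNReal.ofReal (c - U (wealth μ γ A Z N rf W0 x ω))} := by
          rw [mul_comm]
          exact mul_le_mul_right ((hδx x).trans (measure_mono hsub)) _
      _ ≤ _ := mul_meas_ge_le_lintegral₀ hmeas.aemeasurable _
  refine tendsto_nhds_top_mono' ?_ hlow
  have := ENNReal.Tendsto.const_mul (a := δ) (ENNReal.tendsto_ofReal_atTop.comp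
    (tendsto_atTop_add_const_left _ c (tendsto_neg_atBot_atTop.comp (hUbot.comp hwmin))))
    (.inl ENNReal.top_ne_zero)
  rwa [ENNReal.mul_top hδ.ne'] at this

end Model

theorem stmt18_general {Ω : Type*} [MeasurableSpace Ω] (P : Measure Ω) [IsProbabilityMeasure P]
    {d : ℕ} (μ γ : Fin d → ℝ) (A : Matrix (Fin d) (Fin d) ℝ)
    (Z : Ω → ℝ) (N : Ω → Fin d → ℝ)
    (hZmeas : Measurable Z) (hNmeas : Measurable N)
    (hZposprob : 0 < P {ω | 0 < Z ω})
    (hNlaw : Measure.map N P = Measure.pi fun _ : Fin d => gaussianReal 0 1)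
    (hindep : IndepFun Z N P)
    (hPD : (A * Aᵀ).PosDef)
    (rf W0 : ℝ) (hW0 : 0 < W0)
    -- Assumption 1
    (U : ℝ → ℝ) (hUcont : Continuous U) (hUmono : Monotone U)
    (hUbdd : BddAbove (Set.range U))
    (hUbot : Tendsto U atBot atBot)
    (D : Set (Fin d → ℝ)) (hDclosed : IsClosed D)
    (x₁ : Fin d → ℝ) (hx₁D : x₁ ∈ D)
    (hx₁fin : ⊥ < eexp P fun ω => U (wealth μ γ A Z N rf W0 x₁ ω)) :
    UpperSemicontinuous
      (fun x : Fin d → ℝ => eexp P fun ω => U (wealth μ γ A Z N rf W0 x ω)) ∧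
    ∃ x₀ ∈ D,
      (⊥ < eexp P fun ω => U (wealth μ γ A Z N rf W0 x₀ ω)) ∧
      ∀ x ∈ D,
        (eexp P fun ω => U (wealth μ γ A Z N rf W0 x ω)) ≤
          eexp P fun ω => U (wealth μ γ A Z N rf W0 x₀ ω) := by
  obtain ⟨M, hM⟩ := hUbdd
  set c := max M 0
  set G : (Fin d → ℝ) → ℝ≥0∞ :=
    fun x => ∫⁻ ω, ENNReal.ofReal (c - U (wealth μ γ A Z N rf W0 x ω)) ∂P
  have hUW : ∀ x, Measurable fun ω => U (wealth μ γ A Z N rf W0 x ω) := fun x =>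
    hUcont.measurable.comp (measurable_wealth μ γ A Z N rf W0 hZmeas hNmeas x)
  have hF : ∀ x, (eexp P fun ω => U (wealth μ γ A Z N rf W0 x ω)) = (c : EReal) - G x := fun x =>
    eexp_eq_sub_lintegral P (hUW x) (le_max_right M 0)
      fun ω => (hM ⟨_, rfl⟩).trans (le_max_left M 0)
  have hG : LowerSemicontinuous G := lowerSemicontinuous_lintegral P
    (fun x => (measurable_const.sub (hUW x)).ennreal_ofReal)
    fun ω => (ENNReal.continuous_ofReal.comp (continuous_const.sub
      (hUcont.comp (continuous_wealth μ γ A Z N rf W0 ω)))).lowerSemicontinuous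
  have hA : IsUnit A := Matrix.isUnit_of_isUnit_mul hPD.isUnit
  have hGx₁ : G x₁ < ⊤ := by
    rw [hF] at hx₁fin
    exact EReal.bot_lt_coe_sub_coe_ennreal_iff.1 hx₁fin
  have hcoercive : ∀ᶠ x in cocompact _ ⊓ 𝓟 D, G x₁ ≤ G x :=
    ((tendsto_lintegral_ofReal_sub_utility_wealth μ γ A Z N rf W0 P hZmeas hNmeas hZposprob hNlaw
      hindep hA hW0 hUcont hUmono hUbot c).eventually (lt_mem_nhds hGx₁)).filter_mono
      inf_le_left |>.mono fun _ => le_of_lt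
  obtain ⟨x₀, hx₀D, hx₀⟩ := (hG.lowerSemicontinuousOn D).exists_isMinOn' hDclosed hx₁D hcoercive
  simp only [hF]
  exact ⟨(continuous_coe_sub_coe_ennreal c).comp_lowerSemicontinuous_antitone hG
      (antitone_coe_sub_coe_ennreal c), x₀, hx₀D,
    EReal.bot_lt_coe_sub_coe_ennreal_iff.2 ((hx₀ hx₁D).trans_lt hGx₁),
    fun x hx => antitone_coe_sub_coe_ennreal c (hx₀ hx)⟩

/-- under Assumption 1 and `P(Z > 0) > 0`, the map `x ↦ E[U(W(x))]` is
upper semi-continuous, and on any closed set `D` containing a portfolio of finite expected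
utility the maximization problem has a solution. -/
theorem stmt18 {Ω : Type*} [MeasurableSpace Ω] (P : Measure Ω) [IsProbabilityMeasure P]
    {d : ℕ} (μ γ : Fin d → ℝ) (A : Matrix (Fin d) (Fin d) ℝ)
    (Z : Ω → ℝ) (N : Ω → Fin d → ℝ)
    (hZmeas : Measurable Z) (hNmeas : Measurable N)
    (hZnonneg : ∀ ω, 0 ≤ Z ω)
    (hZposprob : 0 < P {ω | 0 < Z ω})
    (hNlaw : Measure.map N P = Measure.pi fun _ : Fin d => gaussianReal 0 1)
    (hindep : IndepFun Z N P)
    (hPD : (A * Aᵀ).PosDef)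
    (rf W0 : ℝ) (hW0 : 0 < W0)
    (hμrf : (fun i => μ i - rf) ≠ 0)
    -- Assumption 1
    (U : ℝ → ℝ) (hUcont : Continuous U) (hUmono : Monotone U)
    (hUnonconst : ∃ w w' : ℝ, U w ≠ U w') (hUbdd : BddAbove (Set.range U))
    (hUbot : Tendsto U atBot atBot)
    (D : Set (Fin d → ℝ)) (hDclosed : IsClosed D)
    (x₁ : Fin d → ℝ) (hx₁D : x₁ ∈ D)
    (hx₁fin : ⊥ < eexp P fun ω => U (wealth μ γ A Z N rf W0 x₁ ω)) :
    UpperSemicontinuous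
      (fun x : Fin d → ℝ => eexp P fun ω => U (wealth μ γ A Z N rf W0 x ω)) ∧
    ∃ x₀ ∈ D,
      (⊥ < eexp P fun ω => U (wealth μ γ A Z N rf W0 x₀ ω)) ∧
      ∀ x ∈ D,
        (eexp P fun ω => U (wealth μ γ A Z N rf W0 x ω)) ≤
          eexp P fun ω => U (wealth μ γ A Z N rf W0 x₀ ω) :=
  stmt18_general P μ γ A Z N hZmeas hNmeas hZposprob hNlaw hindep hPD rf W0 hW0 U hUcont hUmono
    hUbdd hUbot D hDclosed x₁ hx₁D hx₁fin

end
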